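/- If F : ℝ → ℝ satisfies |F'(r)|^p ≤ c_F(|F(r)| + 1) for some p ∈ (1,2] and c_F > 0, and F(r) ≥ C₁ |r|^{p/(p-1)} - C₂ for constants C₁, C₂ > 0, then there exists a constant c > 0 such that |F'(r)| ≤ c(|F(r)| + 1) for all r ∈ ℝ. -/
import Mathlib


theorem stmt_1 (F : ℝ → ℝ) (hF : ContDiff ℝ 1 F) (p cF C₁ C₂ : ℝ)
    (hp1 : 1 < p) (hp2 : p ≤ 2) (hcF : 0 < cF) (hC₁ : 0 < C₁) (hC₂ : 0 < C₂)
    (hN2 : ∀ r : ℝ, |deriv F r| ^ p ≤ cF * (|F r| + 1))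
    (hN3 : ∀ r : ℝ, F r ≥ C₁ * |r| ^ (p / (p - 1)) - C₂) :
    ∃ c : ℝ, 0 < c ∧ ∀ r : ℝ, |deriv F r| ≤ c * (|F r| + 1) := by
  refine ⟨max cF 1, lt_of_lt_of_le one_pos (le_max_right _ _), fun r => ?_⟩
  set a := |deriv F r| with ha
  set b := max cF 1 * (|F r| + 1) with hb
  have hb1 : 1 ≤ b := by
    have h1 : (1:ℝ) ≤ |F r| + 1 := by linarith [abs_nonneg (F r)]
    calc (1:ℝ) = 1 * 1 := by ring
    _ ≤ max cF 1 * (|F r| + 1) := by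
        apply mul_le_mul (le_max_right _ _) h1 one_pos.le
        exact le_trans one_pos.le (le_max_right _ _)
  have h1 : a ^ p ≤ b := by
    refine le_trans (hN2 r) ?_
    have : (0:ℝ) ≤ |F r| + 1 := by positivity
    exact mul_le_mul_of_nonneg_right (le_max_left _ _) this
  have h2 : b ≤ b ^ p := by
    calc b = b ^ (1:ℝ) := (Real.rpow_one b).symm
    _ ≤ b ^ p := Real.rpow_le_rpow_of_exponent_le hb1 hp1.le
  have h3 : a ^ p ≤ b ^ p := le_trans h1 h2

  exact (Real.rpow_le_rpow_iff (abs_nonneg _) (by linarith) (by linarith)).mp h3
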